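/- Let A ∈ ℂ^{m×m}, B ∈ ℂ^{n×n}, and X ∈ ℂ^{m×n} be matrices with rank(AX − XB) = ν, and let k ≥ 0 be an integer. Then for any polynomials p and q of degree at most k, rank( p(A) X q(B) − q(A) X p(B) ) ≤ ν k. -/

import Mathlib

open scoped BigOperators Matrix

/-- The `j`-th singular value (1-indexed) of a complex matrix: the `j`-th largest
nonnegative square root of the eigenvalues of `Xᴴ * X`. Junk value `0` out of range. -/
noncomputable def singularValue {m n : ℕ} (X : Matrix (Fin m) (Fin n) ℂ) (j : ℕ) : ℝ :=
  if h : j - 1 < n then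
    Real.sqrt ((Matrix.isHermitian_conjTranspose_mul_self X).eigenvalues
      (Tuple.sort (Matrix.isHermitian_conjTranspose_mul_self X).eigenvalues (Fin.rev ⟨j - 1, h⟩)))
  else 0

/-- The Zolotarev number `Z_k(E, F)`. -/
noncomputable def zolotarev (k : ℕ) (E F : Set ℂ) : ℝ :=
  sInf { t : ℝ | ∃ p q : Polynomial ℂ, p.natDegree ≤ k ∧ q.natDegree ≤ k ∧ q ≠ 0 ∧
    t = sSup ((fun z => ‖p.eval z / q.eval z‖) '' E) /
        sInf ((fun z => ‖p.eval z / q.eval z‖) '' F) }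

/-- A real interval `[a, b]` viewed as a subset of the complex plane. -/
def realSeg (a b : ℝ) : Set ℂ := (fun x : ℝ => (x : ℂ)) '' Set.Icc a b

/-- The complete elliptic integral of the first kind. -/
noncomputable def ellipticK (l : ℝ) : ℝ :=
  ∫ t in (0:ℝ)..1, 1 / Real.sqrt ((1 - t ^ 2) * (1 - l ^ 2 * t ^ 2))

/-- The Grötzsch ring function `μ`. -/
noncomputable def grotzsch (l : ℝ) : ℝ :=
  Real.pi / 2 * ellipticK (Real.sqrt (1 - l ^ 2)) / ellipticK l

/-- The `ε`-rank of a matrix: the least `k` with `σ_{k+1}(X) ≤ ε ‖X‖₂ = ε σ_1(X)`. -/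
noncomputable def epsRank {m n : ℕ} (X : Matrix (Fin m) (Fin n) ℂ) (ε : ℝ) : ℕ :=
  sInf { k : ℕ | singularValue X (k + 1) ≤ ε * singularValue X 1 }

/-! With `C = A * X - X * B`, the telescoping identity
`A ^ a * X - X * B ^ a = ∑_{i<a} A ^ i * C * B ^ (a - 1 - i)` shows that for `b ≤ a ≤ k`
the columns of
`A ^ a * X * B ^ b - A ^ b * X * B ^ a = A ^ b * (A ^ (a - b) * X - X * B ^ (a - b)) * B ^ b`
lie in the Krylov space `range C + A (range C) + ⋯ + A ^ (k - 1) (range C)`, whose dimension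
is at most `k * rank C`. Expanding `p` and `q` in monomials puts the columns of
`p(A) X q(B) - q(A) X p(B)` in the same space. -/

open Polynomial Module

theorem Submodule.finrank_finset_sup_le {K V ι : Type*} [DivisionRing K] [AddCommGroup V]
    [Module K V] [FiniteDimensional K V] (t : Finset ι) (p : ι → Submodule K V) :
    finrank K ↥(t.sup p) ≤ ∑ i ∈ t, finrank K (p i) := by
  classical
  induction t using Finset.induction_on with
  | empty => simp
  | insert i t hi ih =>
    rw [Finset.sup_insert, Finset.sum_insert hi]
    exact (Submodule.finrank_add_le_finrank_add_finrank _ _).trans (by gcongr)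

namespace Matrix

variable {K : Type*} [Field K] {m n o : Type*} [Fintype n] [Fintype o]

def matricesWithRangeIn (p : Submodule K (m → K)) : Submodule K (Matrix m n K) where
  carrier := {M | ∀ v, M *ᵥ v ∈ p}
  add_mem' hM hN v := by rw [add_mulVec]; exact p.add_mem (hM v) (hN v)
  zero_mem' v := by rw [zero_mulVec]; exact p.zero_mem
  smul_mem' c M hM v := by rw [smul_mulVec]; exact p.smul_mem c (hM v)

theorem mem_matricesWithRangeIn {p : Submodule K (m → K)} {M : Matrix m n K} :
    M ∈ matricesWithRangeIn p ↔ ∀ v, M *ᵥ v ∈ p :=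
  Iff.rfl

theorem matricesWithRangeIn_mono : Monotone (matricesWithRangeIn (K := K) (m := m) (n := n)) :=
  fun _ _ hpq _ hM v => hpq (hM v)

theorem mul_mem_matricesWithRangeIn {p : Submodule K (m → K)} {M : Matrix m n K}
    (hM : M ∈ matricesWithRangeIn p) (N : Matrix n o K) : M * N ∈ matricesWithRangeIn p :=
  fun v => by rw [← mulVec_mulVec]; exact hM _

theorem rank_le_finrank_of_mem_matricesWithRangeIn [Fintype m] {p : Submodule K (m → K)}
    {M : Matrix m n K} (hM : M ∈ matricesWithRangeIn p) : M.rank ≤ finrank K p :=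
  Submodule.finrank_mono (by rintro _ ⟨v, rfl⟩; exact hM v)

section Krylov

variable [Fintype m] [DecidableEq m] (A : Matrix m m K) (C : Matrix m n K)

def krylov (s : ℕ) : Submodule K (m → K) :=
  (Finset.range s).sup fun i => LinearMap.range (A ^ i * C).mulVecLin

theorem krylov_mono : Monotone (krylov A C) :=
  fun _ _ h => Finset.sup_mono (Finset.range_subset_range.2 h)

theorem finrank_krylov_le (s : ℕ) : finrank K (krylov A C s) ≤ s * C.rank :=
  calc finrank K (krylov A C s) ≤ ∑ i ∈ Finset.range s, (A ^ i * C).rank :=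
        Submodule.finrank_finset_sup_le _ _
    _ ≤ ∑ _i ∈ Finset.range s, C.rank := Finset.sum_le_sum fun _ _ => rank_mul_le_right _ _
    _ = s * C.rank := by simp

theorem pow_mul_mem_matricesWithRangeIn_krylov {i s : ℕ} (h : i < s) :
    A ^ i * C ∈ matricesWithRangeIn (krylov A C s) :=
  mem_matricesWithRangeIn.2 fun v =>
    (Finset.le_sup (f := fun i => LinearMap.range (A ^ i * C).mulVecLin) (Finset.mem_range.2 h) :
      LinearMap.range (A ^ i * C).mulVecLin ≤ krylov A C s) (LinearMap.mem_range_self _ v)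

end Krylov

variable [Fintype m] [DecidableEq m] [DecidableEq n]
  (A : Matrix m m K) (B : Matrix n n K) (X : Matrix m n K)

theorem pow_mul_pow_mul_sub_mul_pow_mem (a b : ℕ) :
    A ^ b * (A ^ a * X - X * B ^ a) ∈ matricesWithRangeIn (krylov A (A * X - X * B) (b + a)) := by
  induction a with
  | zero => simp
  | succ a ih =>
    have h : A ^ b * (A ^ (a + 1) * X - X * B ^ (a + 1))
        = A ^ b * (A ^ a * X - X * B ^ a) * B + A ^ (b + a) * (A * X - X * B) := by
      simp only [Matrix.mul_sub, Matrix.sub_mul, Matrix.mul_assoc, pow_succ, pow_add]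
      abel
    rw [h]
    exact add_mem
      (mul_mem_matricesWithRangeIn (matricesWithRangeIn_mono (krylov_mono _ _ (by omega)) ih) B)
      (pow_mul_mem_matricesWithRangeIn_krylov _ _ (by omega))

theorem pow_mul_mul_pow_sub_mem {a b s : ℕ} (ha : a ≤ s) (hb : b ≤ s) :
    A ^ a * X * B ^ b - A ^ b * X * B ^ a ∈ matricesWithRangeIn (krylov A (A * X - X * B) s) := by
  wlog hba : b ≤ a generalizing a b
  · simpa using neg_mem (this hb ha (by omega))
  obtain ⟨d, rfl⟩ := Nat.exists_eq_add_of_le hba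
  have h : A ^ (b + d) * X * B ^ b - A ^ b * X * B ^ (b + d)
      = A ^ b * (A ^ d * X - X * B ^ d) * B ^ b := by
    rw [pow_add A, add_comm b d, pow_add B]
    simp only [Matrix.mul_sub, Matrix.sub_mul, Matrix.mul_assoc]
  rw [h]
  exact mul_mem_matricesWithRangeIn
    (matricesWithRangeIn_mono (krylov_mono _ _ ha) (pow_mul_pow_mul_sub_mul_pow_mem A B X d b)) _

theorem aeval_mul_mul_aeval_eq_sum {p q : K[X]} {k : ℕ} (hp : p.natDegree ≤ k)
    (hq : q.natDegree ≤ k) :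
    aeval A p * X * aeval B q = ∑ a ∈ Finset.range (k + 1), ∑ b ∈ Finset.range (k + 1),
      (p.coeff a * q.coeff b) • (A ^ a * X * B ^ b) := by
  rw [aeval_eq_sum_range' (Nat.lt_succ_of_le hp), aeval_eq_sum_range' (Nat.lt_succ_of_le hq),
    Matrix.sum_mul, Matrix.sum_mul]
  refine Finset.sum_congr rfl fun a _ => ?_
  rw [Matrix.mul_sum]
  refine Finset.sum_congr rfl fun b _ => ?_
  rw [Matrix.smul_mul, Matrix.smul_mul, Matrix.mul_smul, smul_smul]

theorem aeval_mul_mul_aeval_sub_eq_sum {p q : K[X]} {k : ℕ} (hp : p.natDegree ≤ k)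
    (hq : q.natDegree ≤ k) :
    aeval A p * X * aeval B q - aeval A q * X * aeval B p =
      ∑ a ∈ Finset.range (k + 1), ∑ b ∈ Finset.range (k + 1),
        (p.coeff a * q.coeff b) • (A ^ a * X * B ^ b - A ^ b * X * B ^ a) := by
  rw [aeval_mul_mul_aeval_eq_sum A B X hp hq, aeval_mul_mul_aeval_eq_sum A B X hq hp]
  simp only [smul_sub, Finset.sum_sub_distrib]
  rw [Finset.sum_comm (f := fun a b => (p.coeff a * q.coeff b) • (A ^ b * X * B ^ a))]
  simp only [mul_comm (q.coeff _)]

end Matrix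

open Matrix

/-- If `rank(AX - XB) = ν` and `p, q` are polynomials of degree at most `k`,
then `rank(p(A) X q(B) - q(A) X p(B)) ≤ ν k`. -/
theorem rank_aeval_mul_sub_le
    {m n : ℕ} (A : Matrix (Fin m) (Fin m) ℂ) (B : Matrix (Fin n) (Fin n) ℂ)
    (X : Matrix (Fin m) (Fin n) ℂ) (ν k : ℕ)
    (hν : (A * X - X * B).rank = ν)
    (p q : Polynomial ℂ) (hp : p.natDegree ≤ k) (hq : q.natDegree ≤ k) :
    ((Polynomial.aeval A) p * X * (Polynomial.aeval B) q -
      (Polynomial.aeval A) q * X * (Polynomial.aeval B) p).rank ≤ ν * k := by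
  have hmem : (Polynomial.aeval A) p * X * (Polynomial.aeval B) q -
      (Polynomial.aeval A) q * X * (Polynomial.aeval B) p ∈
        matricesWithRangeIn (krylov A (A * X - X * B) k) := by
    rw [aeval_mul_mul_aeval_sub_eq_sum A B X hp hq]
    refine Submodule.sum_mem _ fun a ha => Submodule.sum_mem _ fun b hb => Submodule.smul_mem _ _ ?_
    exact pow_mul_mul_pow_sub_mem A B X (Finset.mem_range_succ_iff.1 ha)
      (Finset.mem_range_succ_iff.1 hb)
  calc _ ≤ finrank ℂ (krylov A (A * X - X * B) k) :=
        rank_le_finrank_of_mem_matricesWithRangeIn hmem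
    _ ≤ k * ν := hν ▸ finrank_krylov_le A _ k
    _ = ν * k := mul_comm _ _
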